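/- arXiv:2203.07232 — 4 statements merged into one kernel-verified Lean document; each statement's English description precedes it below -/
import Mathlib

section
/- Let A be a 2×2 Hermitian matrix with diagonal entries d₁ and a, and off-diagonal entries a₁ and its conjugate. If ε > 0 and a ≥ |a₁|²/ε + d₁, then the eigenvalues λ₁ = (a + d₁ - √((a-d₁)² + 4|a₁|²))/2 and λ₂ = (a + d₁ + √((a-d₁)² + 4|a₁|²))/2 satisfy 0 ≤ d₁ - λ₁ = λ₂ - a < ε. -/
/-! With δ = a - d₁ ≥ 0, both gaps equal (√(δ² + 4‖a₁‖²) - δ) / 2, and the hypothesis says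
‖a₁‖² ≤ εδ, whence δ² + 4‖a₁‖² < (δ + 2ε)². -/

theorem Real.sqrt_sq_add_four_mul_lt {δ b ε : ℝ} (hδ : 0 ≤ δ) (hε : 0 < ε) (hb : b ≤ ε * δ) :
    √(δ ^ 2 + 4 * b) < δ + 2 * ε := by
  rw [Real.sqrt_lt' (by positivity)]
  nlinarith

/-- 2×2 Hermitian matrix [[d₁, a₁],[conj a₁, a]]: if ε > 0 and
a ≥ |a₁|²/ε + d₁ then the explicit eigenvalues λ₁, λ₂ satisfy
0 ≤ d₁ - λ₁ = λ₂ - a < ε. -/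
theorem stmt0 (d₁ a : ℝ) (a₁ : ℂ) (ε : ℝ) (hε : 0 < ε)
    (ha : a ≥ ‖a₁‖ ^ 2 / ε + d₁) :
    0 ≤ d₁ - (a + d₁ - Real.sqrt ((a - d₁) ^ 2 + 4 * ‖a₁‖ ^ 2)) / 2 ∧
    d₁ - (a + d₁ - Real.sqrt ((a - d₁) ^ 2 + 4 * ‖a₁‖ ^ 2)) / 2 =
      (a + d₁ + Real.sqrt ((a - d₁) ^ 2 + 4 * ‖a₁‖ ^ 2)) / 2 - a ∧
    (a + d₁ + Real.sqrt ((a - d₁) ^ 2 + 4 * ‖a₁‖ ^ 2)) / 2 - a < ε := by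
  have hgap : ‖a₁‖ ^ 2 / ε ≤ a - d₁ := by linarith
  have hδ : 0 ≤ a - d₁ := (by positivity : 0 ≤ ‖a₁‖ ^ 2 / ε).trans hgap
  have hb : ‖a₁‖ ^ 2 ≤ ε * (a - d₁) := by rwa [div_le_iff₀ hε, mul_comm] at hgap
  have hlower : a - d₁ ≤ √((a - d₁) ^ 2 + 4 * ‖a₁‖ ^ 2) :=
    (Real.le_sqrt hδ (by positivity)).mpr (le_add_of_nonneg_right (by positivity))
  have hupper := Real.sqrt_sq_add_four_mul_lt hδ hε hb
  refine ⟨by linarith, by ring, by linarith⟩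
end

section
/- (Generalized Newton–Maclaurin inequality) Let μ₁,…,μₙ > 0 with n ≥ 2. Then Σᵢ 1/μᵢ ≥ n^{(n-2)/(n-1)} · ((Σᵢ μᵢ)/(μ₁⋯μₙ))^{1/(n-1)}. -/
/-!
With `xᵢ = μᵢ⁻¹`, the quotient `(∑ μᵢ) / ∏ μᵢ` is the elementary symmetric function
`e_{n-1}(x) = ∑ᵢ ∏_{j ≠ i} xⱼ`, and the inequality is Maclaurin's `e_{n-1} / n ≤ (e₁ / n)^(n-1)`
after taking `(n-1)`-th roots. Maclaurin's inequality for `e_{n-1}` goes by induction on the number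
of variables: splitting off one variable `a`, `e_{n-1} = ∏ (others) + a · e_{n-2}(others)`; AM–GM
bounds the product and the induction hypothesis the second term, both in terms of the mean `v` of
the others, and the tangent-line inequality for `t ↦ t^(m+1)` at `v` closes the step.
-/

open Finset

variable {ι : Type*}

theorem add_one_mul_pow_mul_le {R : Type*} [CommRing R] [LinearOrder R] [IsStrictOrderedRing R]
    (n : ℕ) {a c : R} (ha : 0 ≤ a) (hc : 0 ≤ c) :
    (n + 1) * a ^ n * c ≤ n * a ^ (n + 1) + c ^ (n + 1) := by
  induction n with
  | zero => simp
  | succ m ih =>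
    have hsq : 0 ≤ (m + 1) * a ^ m * (c - a) ^ 2 := by positivity
    push_cast
    linear_combination mul_le_mul_of_nonneg_left ih hc + hsq

theorem prod_le_mean_pow_card (s : Finset ι) {x : ι → ℝ} (hx : ∀ i ∈ s, 0 ≤ x i) :
    ∏ i ∈ s, x i ≤ ((∑ i ∈ s, x i) / #s) ^ #s := by
  rcases s.eq_empty_or_nonempty with rfl | hs
  · simp
  have hgm := Real.geom_mean_le_arith_mean s (fun _ ↦ 1) x (fun _ _ ↦ zero_le_one)
    (by simpa using hs) hx
  simp only [Real.rpow_one, sum_const, nsmul_eq_mul, mul_one, one_mul] at hgm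
  calc ∏ i ∈ s, x i = ((∏ i ∈ s, x i) ^ ((#s : ℝ)⁻¹)) ^ #s :=
        (Real.rpow_inv_natCast_pow (prod_nonneg hx) hs.card_pos.ne').symm
    _ ≤ _ := pow_le_pow_left₀ (Real.rpow_nonneg (prod_nonneg hx) _) hgm _

theorem pow_succ_add_mul_pow_le (m : ℕ) {v a : ℝ} (hv : 0 ≤ v) (ha : 0 ≤ a) :
    v ^ (m + 1) + (m + 1) * a * v ^ m ≤ (m + 2) * (((m + 1) * v + a) / (m + 2)) ^ (m + 1) := by
  generalize hM_def : ((m + 1) * v + a) / (m + 2) = M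
  have hM : (m + 2) * M = (m + 1) * v + a := by rw [← hM_def]; field_simp
  have tangent := add_one_mul_pow_mul_le m hv (hM_def ▸ by positivity : 0 ≤ M)
  linear_combination (m + 2) * tangent - (m + 1) * v ^ m * hM

theorem sum_prod_erase_cons [DecidableEq ι] {R : Type*} [CommSemiring R] (x : ι → R)
    {s : Finset ι} {a : ι} (ha : a ∉ s) :
    ∑ i ∈ cons a s ha, ∏ j ∈ (cons a s ha).erase i, x j
      = ∏ j ∈ s, x j + x a * ∑ i ∈ s, ∏ j ∈ s.erase i, x j := by
  rw [sum_cons, erase_cons ha, mul_sum]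
  congr 1
  refine sum_congr rfl fun i hi ↦ ?_
  rw [erase_cons_of_ne ha (ne_of_mem_of_not_mem hi ha).symm, prod_cons]

theorem sum_prod_erase_le_card_mul_mean_pow [DecidableEq ι] (s : Finset ι) {x : ι → ℝ}
    (hx : ∀ i ∈ s, 0 ≤ x i) :
    ∑ i ∈ s, ∏ j ∈ s.erase i, x j ≤ #s * ((∑ i ∈ s, x i) / #s) ^ (#s - 1) := by
  induction s using Finset.cons_induction with
  | empty => simp
  | cons a s ha ih =>
    rcases s.eq_empty_or_nonempty with rfl | hs
    · simp
    obtain ⟨m, hm⟩ : ∃ m, #s = m + 1 := Nat.exists_eq_add_one.mpr hs.card_pos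
    have hxs : ∀ i ∈ s, 0 ≤ x i := fun i hi ↦ hx i (mem_cons_of_mem hi)
    have hxa : 0 ≤ x a := hx a (mem_cons_self a s)
    set v := (∑ i ∈ s, x i) / #s
    have hv : 0 ≤ v := div_nonneg (sum_nonneg hxs) (Nat.cast_nonneg _)
    have hsum : ∑ i ∈ s, x i = (m + 1) * v := by
      have hcard : (#s : ℝ) = m + 1 := by rw [hm]; push_cast; rfl
      simp only [v, hcard]
      field_simp
    have hprod : ∏ j ∈ s, x j ≤ v ^ (m + 1) := hm ▸ prod_le_mean_pow_card s hxs
    have hrec : ∑ i ∈ s, ∏ j ∈ s.erase i, x j ≤ (m + 1) * v ^ m := by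
      simpa [hm] using ih hxs
    calc ∑ i ∈ cons a s ha, ∏ j ∈ (cons a s ha).erase i, x j
        = ∏ j ∈ s, x j + x a * ∑ i ∈ s, ∏ j ∈ s.erase i, x j := sum_prod_erase_cons x ha
      _ ≤ v ^ (m + 1) + x a * ((m + 1) * v ^ m) := by gcongr
      _ ≤ (m + 2) * (((m + 1) * v + x a) / (m + 2)) ^ (m + 1) := by
        linarith [pow_succ_add_mul_pow_le m hv hxa]
      _ = _ := by
        rw [card_cons, hm, sum_cons, hsum]
        push_cast
        ring

theorem sum_prod_erase_inv [DecidableEq ι] {K : Type*} [Field K] (s : Finset ι) {μ : ι → K}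
    (hμ : ∀ i ∈ s, μ i ≠ 0) :
    ∑ i ∈ s, ∏ j ∈ s.erase i, (μ j)⁻¹ = (∑ i ∈ s, μ i) / ∏ i ∈ s, μ i := by
  rw [sum_div]
  refine sum_congr rfl fun i hi ↦ ?_
  rw [prod_inv_distrib, ← mul_prod_erase s μ hi, div_mul_cancel_left₀ (hμ i hi)]

theorem rpow_mul_rpow_le_of_le_mul_div_pow {n : ℕ} (hn : 2 ≤ n) {A B : ℝ} (hA : 0 ≤ A)
    (hB : 0 ≤ B) (h : A ≤ n * (B / n) ^ (n - 1)) :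
    (n : ℝ) ^ (((n : ℝ) - 2) / ((n : ℝ) - 1)) * A ^ ((1 : ℝ) / ((n : ℝ) - 1)) ≤ B := by
  have hn' : (2 : ℝ) ≤ n := by exact_mod_cast hn
  have hn0 : (0 : ℝ) < n := by linarith
  set p : ℝ := n - 1
  have hp : 0 < p := by linarith
  have hpow : (B / n) ^ (n - 1) = (B / n) ^ p := by
    rw [← Real.rpow_natCast, Nat.cast_sub (by omega), Nat.cast_one]
  rw [hpow] at h
  calc (n : ℝ) ^ ((n - 2) / p) * A ^ (1 / p)
      ≤ n ^ ((n - 2) / p) * (n * (B / n) ^ p) ^ (1 / p) := by gcongr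
    _ = n ^ ((n - 2) / p + 1 / p) * (B / n) := by
      rw [Real.mul_rpow hn0.le (by positivity), ← Real.rpow_mul (by positivity),
        mul_one_div_cancel hp.ne', Real.rpow_one, Real.rpow_add hn0, mul_assoc]
    _ = B := by
      rw [show ((n : ℝ) - 2) / p + 1 / p = 1 by field_simp; ring, Real.rpow_one]
      field_simp

/-- Generalized Newton–Maclaurin inequality:
Σᵢ 1/μᵢ ≥ n^{(n-2)/(n-1)} ((Σᵢ μᵢ)/(μ₁⋯μₙ))^{1/(n-1)}. -/
theorem stmt9 (n : ℕ) (hn : 2 ≤ n) (μ : Fin n → ℝ) (hμ : ∀ i, 0 < μ i) :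
    ∑ i : Fin n, (μ i)⁻¹
      ≥ (n : ℝ) ^ (((n : ℝ) - 2) / ((n : ℝ) - 1)) *
        ((∑ i : Fin n, μ i) / ∏ i : Fin n, μ i) ^ ((1 : ℝ) / ((n : ℝ) - 1)) := by
  have hmaclaurin := sum_prod_erase_le_card_mul_mean_pow univ fun i _ ↦ (inv_pos.mpr (hμ i)).le
  rw [sum_prod_erase_inv univ fun i _ ↦ (hμ i).ne', card_univ, Fintype.card_fin] at hmaclaurin
  exact rpow_mul_rpow_le_of_le_mul_div_pow hn
    (div_nonneg (sum_nonneg fun i _ ↦ (hμ i).le) (prod_nonneg fun i _ ↦ (hμ i).le))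
    (sum_nonneg fun i _ ↦ (inv_pos.mpr (hμ i)).le) hmaclaurin
end

section
/- Let A be an n×n Hermitian arrowhead matrix (n ≥ 3) with diagonal d₁,…,d_{n-1}, a, last-column entries a₁,…,a_{n-1}, and eigenvalues λ₁ ≤ ⋯ ≤ λₙ. Fix ε > 0 and suppose a ≥ (1/ε) Σᵢ|aᵢ|² + Σᵢ [dᵢ + (n-2)|dᵢ|] + (n-2)ε. Then for each α ∈ {1,…,n-1} there exists an index i_α ∈ {1,…,n-1} with |λ_α − d_{i_α}| < ε, and moreover 0 ≤ λₙ − a < (n-1)ε + |Σ_{α=1}^{n-1}(d_α − d_{i_α})|. -/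
/-!
An eigenvalue `λ` of the arrowhead matrix at distance at least `ε` from every `dᵢ` satisfies the
secular equation `λ - a = ∑ |aᵢ|² / (λ - dᵢ)`, hence `λ ≥ a - R` with `R = ∑ |aᵢ|² / ε`; every
other eigenvalue lies within `ε` of some `dᵢ`. Thus all eigenvalues exceed `-∑ |dᵢ| - ε`. If one of
`λ₁, …, λₙ₋₁` were far from all `dᵢ`, then it and `λₙ ≥ a` would make the trace `∑ dᵢ + a` larger
than the growth condition on `a` allows (strictly, since `n - 1 ≥ 2` leaves a further
eigenvalue). Finally the trace identity gives `λₙ - a = ∑ (d_α - λ_α)`, which is split through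
`d_{i_α}`.
-/

open Finset Matrix

open scoped MatrixOrder ComplexOrder in
theorem Matrix.IsHermitian.re_apply_self_le_of_eigenvalues_le {𝕜 n : Type*} [RCLike 𝕜]
    [Fintype n] [DecidableEq n] {A : Matrix n n 𝕜} (hA : A.IsHermitian) {c : ℝ}
    (hc : ∀ j, hA.eigenvalues j ≤ c) (i : n) :
    RCLike.re (A i i) ≤ c := by
  have hle : A ≤ algebraMap ℝ _ c := le_algebraMap_of_spectrum_le fun x hx => by
    obtain ⟨j, rfl⟩ := hA.spectrum_real_eq_range_eigenvalues ▸ hx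
    exact hc j
  have hdiag := (Matrix.le_iff.mp hle).diag_nonneg (i := i)
  rw [sub_apply, algebraMap_matrix_apply, if_pos rfl, RCLike.nonneg_iff, map_sub,
    RCLike.algebraMap_eq_ofReal, RCLike.ofReal_re] at hdiag
  linarith [hdiag.1]

namespace Matrix

variable {𝕜 : Type*} [RCLike 𝕜] {m : ℕ}

def arrowhead (d : Fin m → ℝ) (a : ℝ) (v : Fin m → 𝕜) : Matrix (Fin (m + 1)) (Fin (m + 1)) 𝕜 :=
  of fun i j =>
    Fin.lastCases (Fin.lastCases (a : 𝕜) (fun j => star (v j)) j)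
      (fun i => Fin.lastCases (v i) (fun j => if i = j then (d i : 𝕜) else 0) j) i

variable {d : Fin m → ℝ} {a : ℝ} {v : Fin m → 𝕜}

@[simp] theorem arrowhead_castSucc_castSucc (i j : Fin m) :
    arrowhead d a v i.castSucc j.castSucc = if i = j then (d i : 𝕜) else 0 := by
  simp [arrowhead]

@[simp] theorem arrowhead_castSucc_last (i : Fin m) :
    arrowhead d a v i.castSucc (Fin.last m) = v i := by
  simp [arrowhead]

@[simp] theorem arrowhead_last_castSucc (j : Fin m) :
    arrowhead d a v (Fin.last m) j.castSucc = star (v j) := by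
  simp [arrowhead]

@[simp] theorem arrowhead_last_last : arrowhead d a v (Fin.last m) (Fin.last m) = (a : 𝕜) := by
  simp [arrowhead]

theorem trace_arrowhead : (arrowhead d a v).trace = ((∑ i, d i + a : ℝ) : 𝕜) := by
  simp [trace, Fin.sum_univ_castSucc]

theorem sub_eq_sum_div_of_arrowhead_mulVec_eq_smul {μ : ℝ} {x : Fin (m + 1) → 𝕜} (hx : x ≠ 0)
    (hμx : arrowhead d a v *ᵥ x = (μ : 𝕜) • x) (hμ : ∀ i, μ ≠ d i) :
    μ - a = ∑ i, ‖v i‖ ^ 2 / (μ - d i) := by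
  have hμ' : ∀ i, (μ : 𝕜) - d i ≠ 0 := fun i => by
    rw [← RCLike.ofReal_sub, RCLike.ofReal_ne_zero, sub_ne_zero]; exact hμ i
  have hrow : ∀ i, x i.castSucc = v i * x (Fin.last m) / (μ - d i) := fun i => by
    have h := congrFun hμx i.castSucc
    simp only [mulVec, dotProduct, Fin.sum_univ_castSucc, arrowhead_castSucc_castSucc, ite_mul,
      zero_mul, sum_ite_eq, mem_univ, ↓reduceIte, arrowhead_castSucc_last, Pi.smul_apply,
      smul_eq_mul] at h
    rw [eq_div_iff (hμ' i)]
    linear_combination -h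
  have hlast := congrFun hμx (Fin.last m)
  simp only [mulVec, dotProduct, Fin.sum_univ_castSucc, arrowhead_last_castSucc,
    arrowhead_last_last, hrow, Pi.smul_apply, smul_eq_mul] at hlast
  have hxlast : x (Fin.last m) ≠ 0 := by
    intro h0
    refine hx (funext fun j => Fin.lastCases h0 (fun i => ?_) j)
    simp [hrow, h0]
  have hsum : ∑ i, star (v i) * (v i * x (Fin.last m) / (μ - d i))
      = ∑ i, ((‖v i‖ ^ 2 / (μ - d i) : ℝ) : 𝕜) * x (Fin.last m) :=
    sum_congr rfl fun i _ => by push_cast; rw [← RCLike.conj_mul, ← RCLike.star_def]; ring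
  refine RCLike.ofReal_injective (K := 𝕜) (mul_right_cancel₀ hxlast ?_)
  rw [RCLike.ofReal_sum, sum_mul, ← hsum]
  push_cast
  linear_combination -hlast

variable (hA : (arrowhead d a v).IsHermitian)

theorem sum_eigenvalues_arrowhead : ∑ k, hA.eigenvalues k = ∑ i, d i + a := by
  have h := hA.trace_eq_sum_eigenvalues
  rw [trace_arrowhead, ← RCLike.ofReal_sum] at h
  exact_mod_cast h.symm

theorem le_of_eigenvalues_arrowhead_le {c : ℝ} (hc : ∀ k, hA.eigenvalues k ≤ c) : a ≤ c := by
  simpa using hA.re_apply_self_le_of_eigenvalues_le hc (Fin.last m)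

theorem abs_eigenvalues_arrowhead_sub_le {ε : ℝ} (hε : 0 < ε) {k : Fin (m + 1)}
    (hfar : ∀ i, ε ≤ |hA.eigenvalues k - d i|) :
    |hA.eigenvalues k - a| ≤ (∑ i, ‖v i‖ ^ 2) / ε := by
  have hne : ∀ i, hA.eigenvalues k ≠ d i := fun i h => by
    have := hfar i
    rw [h, sub_self, abs_zero] at this
    exact this.not_gt hε
  have hvec : ⇑(hA.eigenvectorBasis k) ≠ 0 := fun h =>
    hA.eigenvectorBasis.orthonormal.ne_zero k (WithLp.ofLp_injective 2 h)
  rw [sub_eq_sum_div_of_arrowhead_mulVec_eq_smul hvec (by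
    simpa only [RCLike.real_smul_eq_coe_smul (K := 𝕜)] using hA.mulVec_eigenvectorBasis k) hne,
    sum_div]
  calc |∑ i, ‖v i‖ ^ 2 / (hA.eigenvalues k - d i)|
      ≤ ∑ i, |‖v i‖ ^ 2 / (hA.eigenvalues k - d i)| := abs_sum_le_sum_abs _ _
    _ ≤ ∑ i, ‖v i‖ ^ 2 / ε := sum_le_sum fun i _ => by
      rw [abs_div, abs_of_nonneg (by positivity)]
      exact div_le_div_of_nonneg_left (by positivity) hε (hfar i)

end Matrix

namespace ArrowheadSpectrum

/- `μ` stands for the ordered eigenvalues of `arrowhead d a v` and `R` for the radius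
`∑ ‖vᵢ‖² / ε` of the secular-equation bound. -/

variable {m : ℕ} {d : Fin m → ℝ} {a R ε : ℝ} {μ : Fin (m + 1) → ℝ}

theorem neg_sum_abs_sub_lt (hm : 0 < m) (hε : 0 < ε)
    (hfar : ∀ k, (∀ i, ε ≤ |μ k - d i|) → a - R ≤ μ k)
    (ha : R + ∑ i, d i + ((m : ℝ) - 1) * ∑ i, |d i| + ((m : ℝ) - 1) * ε ≤ a) (k : Fin (m + 1)) :
    -∑ i, |d i| - ε < μ k := by
  by_cases hk : ∀ i, ε ≤ |μ k - d i|
  · have hsum : -∑ i, |d i| ≤ ∑ i, d i := by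
      rw [← sum_neg_distrib]; exact sum_le_sum fun i _ => neg_abs_le (d i)
    have hm1 : (0 : ℝ) ≤ m - 1 := by
      rw [sub_nonneg]; exact_mod_cast hm
    have habs := mul_nonneg hm1 (sum_nonneg fun i (_ : i ∈ univ) => abs_nonneg (d i))
    linarith [hfar k hk, mul_nonneg hm1 hε.le]
  · push Not at hk
    obtain ⟨i, hi⟩ := hk
    have hdi : |d i| ≤ ∑ j, |d j| := single_le_sum (fun j _ => abs_nonneg (d j)) (mem_univ i)
    linarith [(abs_lt.mp hi).1, neg_abs_le (d i)]

theorem exists_abs_sub_lt (hm : 2 ≤ m) (hε : 0 < ε) (htrace : ∑ k, μ k = ∑ i, d i + a)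
    (htop : a ≤ μ (Fin.last m)) (hfar : ∀ k, (∀ i, ε ≤ |μ k - d i|) → a - R ≤ μ k)
    (ha : R + ∑ i, d i + ((m : ℝ) - 1) * ∑ i, |d i| + ((m : ℝ) - 1) * ε ≤ a) (α : Fin m) :
    ∃ i, |μ α.castSucc - d i| < ε := by
  by_contra! hα
  set T := ∑ i, |d i| + ε
  have hpos : ∀ β : Fin m, 0 < μ β.castSucc + T := fun β => by
    linarith [neg_sum_abs_sub_lt (by omega) hε hfar ha β.castSucc]
  have : Nontrivial (Fin m) := Fin.nontrivial_iff_two_le.mpr hm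
  obtain ⟨β, hβ⟩ := exists_ne α
  have hlt := single_lt_sum hβ (mem_univ α) (mem_univ β) (hpos β) fun γ _ _ => (hpos γ).le
  rw [sum_add_distrib, sum_const, card_univ, Fintype.card_fin, nsmul_eq_mul] at hlt
  rw [Fin.sum_univ_castSucc] at htrace
  linarith [hfar _ hα]

theorem sub_lt_of_abs_sub_lt (hm : 0 < m) (htrace : ∑ k, μ k = ∑ i, d i + a) (idx : Fin m → Fin m)
    (hidx : ∀ α, |μ α.castSucc - d (idx α)| < ε) :
    μ (Fin.last m) - a < m * ε + |∑ α, (d α - d (idx α))| := by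
  have hne : (univ : Finset (Fin m)).Nonempty := ⟨⟨0, hm⟩, mem_univ _⟩
  have hclose : ∑ α, (d (idx α) - μ α.castSucc) < ∑ _α : Fin m, ε :=
    sum_lt_sum_of_nonempty hne fun α _ => (abs_sub_lt_iff.mp (hidx α)).2
  rw [sum_const, card_univ, Fintype.card_fin, nsmul_eq_mul] at hclose
  have hsplit : μ (Fin.last m) - a
      = ∑ α, (d α - d (idx α)) + ∑ α, (d (idx α) - μ α.castSucc) := by
    rw [Fin.sum_univ_castSucc] at htrace
    rw [← sum_add_distrib]
    simp only [sub_add_sub_cancel, sum_sub_distrib]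
    linarith
  linarith [le_abs_self (∑ α, (d α - d (idx α)))]

end ArrowheadSpectrum

/-- Quantitative deformation lemma for Hermitian arrowhead matrices (n = m+1 ≥ 3):
under the quadratic growth condition on a, each of the first n−1 ordered
eigenvalues is ε-close to some dᵢ, and the largest eigenvalue is close to a. -/
theorem stmt16 (m : ℕ) (hm : 2 ≤ m) (d : Fin m → ℝ) (a : ℝ) (av : Fin m → ℂ)
    (ε : ℝ) (hε : 0 < ε)
    (A : Matrix (Fin (m + 1)) (Fin (m + 1)) ℂ)
    (hA : ∀ i j, A i j =
      if hi : i = Fin.last m then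
        (if hj : j = Fin.last m then (a : ℂ)
         else (starRingEnd ℂ) (av (j.castPred hj)))
      else
        (if hj : j = Fin.last m then av (i.castPred hi)
         else if i = j then (d (i.castPred hi) : ℂ) else 0))
    (hHerm : A.IsHermitian)
    (μ : Fin (m + 1) → ℝ) (hmono : Monotone μ)
    (henum : ∃ σ : Equiv.Perm (Fin (m + 1)), ∀ i, μ i = hHerm.eigenvalues (σ i))
    (ha : (1 / ε) * ∑ i : Fin m, ‖av i‖ ^ 2
            + ∑ i : Fin m, (d i + ((m : ℝ) - 1) * |d i|)
            + ((m : ℝ) - 1) * ε ≤ a) :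
    ∃ idx : Fin m → Fin m,
      (∀ α : Fin m, |μ α.castSucc - d (idx α)| < ε) ∧
      0 ≤ μ (Fin.last m) - a ∧
      μ (Fin.last m) - a < (m : ℝ) * ε + |∑ α : Fin m, (d α - d (idx α))| := by
  obtain ⟨σ, hσ⟩ := henum
  obtain rfl : A = arrowhead d a av := by
    ext i j
    induction i using Fin.lastCases <;> induction j using Fin.lastCases <;>
      simp [hA, Fin.castSucc_inj]
  have htrace : ∑ k, μ k = ∑ i, d i + a := by
    simp only [hσ, Equiv.sum_comp σ hHerm.eigenvalues, sum_eigenvalues_arrowhead]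
  have htop : a ≤ μ (Fin.last m) := le_of_eigenvalues_arrowhead_le hHerm fun k => by
    simpa [hσ] using hmono (Fin.le_last (σ.symm k))
  have hfar : ∀ k, (∀ i, ε ≤ |μ k - d i|) → a - (1 / ε) * ∑ i, ‖av i‖ ^ 2 ≤ μ k := by
    intro k hk
    simp only [hσ] at hk ⊢
    rw [one_div_mul_eq_div]
    linarith [(abs_le.mp (abs_eigenvalues_arrowhead_sub_le hHerm hε hk)).1]
  rw [sum_add_distrib, ← mul_sum, ← add_assoc] at ha
  choose idx hidx using ArrowheadSpectrum.exists_abs_sub_lt hm hε htrace htop hfar ha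
  exact ⟨idx, hidx, sub_nonneg.mpr htop,
    ArrowheadSpectrum.sub_lt_of_abs_sub_lt (by omega) htrace idx hidx⟩
end

section
/- Let A be an n×n Hermitian arrowhead matrix (n ≥ 2) with diagonal d₁,…,d_{n-1}, a and last-column entries a₁,…,a_{n-1}. Fix ε > 0 and suppose a ≥ ((2n-3)/ε) Σᵢ|aᵢ|² + (n-1) Σᵢ|dᵢ| + (n-2)ε/(2n-3). Then the eigenvalues of A, suitably ordered as λ₁,…,λₙ, satisfy d_α − ε < λ_α < d_α + ε for each α ∈ {1,…,n-1}, and a ≤ λₙ < a + (n-1)ε. -/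
/-!
Sort the eigenvalues `λ₀ ≤ … ≤ λₘ` of `A` and the diagonal entries `d_(0) ≤ … ≤ d_(m-1)`.
On the span of the coordinate vectors of the `k + 1` smallest `dᵢ` the quadratic form of `A` is
that of `diag d`, so the min-max principle gives `λₖ ≤ d_(k)`. The top eigenvalue `λₘ` is at
least the diagonal entry `a`, and the secular equation `λ - a = ∑ |aᵢ|² / (λ - dᵢ)` keeps it below
`a + ε` as soon as `∑ |aᵢ|² ≤ ε (a - ∑ |dᵢ|)`. Comparing traces, the nonnegative gaps
`d_(k) - λₖ` add up to `λₘ - a < ε`, so each of them is below `ε`.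
-/

open Finset Matrix Module Submodule

namespace OrthonormalBasis

variable {𝕜 ι E : Type*} [RCLike 𝕜] [Fintype ι] [NormedAddCommGroup E] [InnerProductSpace 𝕜 E]
  (b : OrthonormalBasis ι 𝕜 E)

theorem finrank_span_image [DecidableEq ι] (s : Finset ι) : finrank 𝕜 (span 𝕜 (b '' s)) = #s := by
  rw [Set.image_eq_range]
  exact (finrank_span_eq_card (b.orthonormal.linearIndependent.comp _ Subtype.val_injective)).trans
    (by simp)

theorem inner_eq_zero_of_mem_span_image {s : Set ι} {x : E} (hx : x ∈ span 𝕜 (b '' s)) {i : ι}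
    (hi : i ∉ s) : inner 𝕜 (b i) x = 0 := by
  have : span 𝕜 (b '' s) ≤ LinearMap.ker (innerₛₗ 𝕜 (b i)) := by
    rw [span_le]
    rintro _ ⟨j, hj, rfl⟩
    exact b.orthonormal.2 (ne_of_mem_of_not_mem hj hi).symm
  exact this hx

end OrthonormalBasis

namespace Matrix.IsHermitian

variable {𝕜 ι : Type*} [RCLike 𝕜] [Fintype ι] [DecidableEq ι] {B : Matrix ι ι 𝕜}
  (hB : B.IsHermitian)

theorem toEuclideanLin_eigenvectorBasis (j : ι) :
    toEuclideanLin B (hB.eigenvectorBasis j) = hB.eigenvalues j • hB.eigenvectorBasis j :=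
  congrArg (WithLp.toLp 2) (hB.mulVec_eigenvectorBasis j)

theorem inner_eigenvectorBasis_toEuclideanLin (j : ι) (x : EuclideanSpace 𝕜 ι) :
    inner 𝕜 (hB.eigenvectorBasis j) (toEuclideanLin B x)
      = hB.eigenvalues j * inner 𝕜 (hB.eigenvectorBasis j) x := by
  rw [← isSymmetric_toEuclideanLin_iff.mpr hB, toEuclideanLin_eigenvectorBasis,
    RCLike.real_smul_eq_coe_smul (K := 𝕜), inner_smul_left, RCLike.conj_ofReal]

theorem re_inner_toEuclideanLin (x : EuclideanSpace 𝕜 ι) :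
    RCLike.re (inner 𝕜 x (toEuclideanLin B x))
      = ∑ j, hB.eigenvalues j * ‖inner 𝕜 (hB.eigenvectorBasis j) x‖ ^ 2 := by
  rw [← hB.eigenvectorBasis.sum_inner_mul_inner, map_sum]
  refine sum_congr rfl fun j _ => ?_
  rw [inner_eigenvectorBasis_toEuclideanLin, mul_left_comm, ← inner_conj_symm, RCLike.conj_mul]
  norm_cast

theorem re_diag_le {c : ℝ} (hc : ∀ j, hB.eigenvalues j ≤ c) (i : ι) : RCLike.re (B i i) ≤ c := by
  set x := EuclideanSpace.single i (1 : 𝕜)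
  have hBii : inner 𝕜 x (toEuclideanLin B x) = B i i := by
    simp [x, EuclideanSpace.inner_eq_star_dotProduct, toLpLin_apply, mulVec_single]
  calc RCLike.re (B i i) = ∑ j, hB.eigenvalues j * ‖inner 𝕜 (hB.eigenvectorBasis j) x‖ ^ 2 := by
        rw [← hBii, re_inner_toEuclideanLin]
    _ ≤ ∑ j, c * ‖inner 𝕜 (hB.eigenvectorBasis j) x‖ ^ 2 := by gcongr with j; exact hc j
    _ = c := by rw [← mul_sum, hB.eigenvectorBasis.sum_sq_norm_inner_right]; simp [x]

theorem lt_re_inner_of_mem_span {c : ℝ} {J : Set ι} (hJ : ∀ j ∈ J, c < hB.eigenvalues j)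
    {x : EuclideanSpace 𝕜 ι} (hx : x ∈ span 𝕜 (hB.eigenvectorBasis '' J)) (hx0 : x ≠ 0) :
    c * ‖x‖ ^ 2 < RCLike.re (inner 𝕜 x (toEuclideanLin B x)) := by
  have hJc : ∀ j ∉ J, inner 𝕜 (hB.eigenvectorBasis j) x = 0 := fun j hj =>
    hB.eigenvectorBasis.inner_eq_zero_of_mem_span_image hx hj
  obtain ⟨j₀, hj₀⟩ : ∃ j, inner 𝕜 (hB.eigenvectorBasis j) x ≠ 0 := by
    by_contra! h
    exact hx0 (by simpa [h] using (hB.eigenvectorBasis.sum_repr' x).symm)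
  have hj₀J : j₀ ∈ J := by by_contra h; exact hj₀ (hJc j₀ h)
  rw [re_inner_toEuclideanLin, ← hB.eigenvectorBasis.sum_sq_norm_inner_right, mul_sum]
  refine sum_lt_sum (fun j _ => ?_) ⟨j₀, mem_univ _, by gcongr; exact hJ j₀ hj₀J⟩
  by_cases hj : j ∈ J
  · gcongr; exact (hJ j hj).le
  · simp [hJc j hj]

theorem card_add_finrank_le {c : ℝ} (J : Finset ι) (hJ : ∀ j ∈ J, c < hB.eigenvalues j)
    (W : Submodule 𝕜 (EuclideanSpace 𝕜 ι))
    (hW : ∀ x ∈ W, RCLike.re (inner 𝕜 x (toEuclideanLin B x)) ≤ c * ‖x‖ ^ 2) :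
    #J + finrank 𝕜 W ≤ Fintype.card ι := by
  rw [← hB.eigenvectorBasis.finrank_span_image J, ← finrank_euclideanSpace (𝕜 := 𝕜)]
  refine finrank_add_finrank_le_of_disjoint (disjoint_def.mpr fun x hxV hxW => ?_)
  by_contra hx0
  exact (hW x hxW).not_gt (hB.lt_re_inner_of_mem_span hJ hxV hx0)

end Matrix.IsHermitian

theorem Matrix.IsHermitian.eigenvalues_sort_le {𝕜 : Type*} [RCLike 𝕜] {n : ℕ}
    {B : Matrix (Fin n) (Fin n) 𝕜} (hB : B.IsHermitian) {c : ℝ} (k : Fin n)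
    (W : Submodule 𝕜 (EuclideanSpace 𝕜 (Fin n))) (hk : k + 1 ≤ finrank 𝕜 W)
    (hW : ∀ x ∈ W, RCLike.re (inner 𝕜 x (toEuclideanLin B x)) ≤ c * ‖x‖ ^ 2) :
    hB.eigenvalues (Tuple.sort hB.eigenvalues k) ≤ c := by
  by_contra! hlt
  have hJ : ∀ j ∈ (Ici k).image (Tuple.sort hB.eigenvalues), c < hB.eigenvalues j := by
    simp only [mem_image, mem_Ici, forall_exists_index, and_imp]
    rintro _ l hkl rfl
    exact hlt.trans_le (Tuple.monotone_sort hB.eigenvalues hkl)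
  have := hB.card_add_finrank_le _ hJ W hW
  rw [card_image_of_injective _ (Equiv.injective _), Fin.card_Ici, Fintype.card_fin] at this
  omega

def IsArrowhead {m : ℕ} (A : Matrix (Fin (m + 1)) (Fin (m + 1)) ℂ) (d : Fin m → ℝ) (a : ℝ)
    (av : Fin m → ℂ) : Prop :=
  ∀ i j, A i j =
    if hi : i = Fin.last m then
      (if hj : j = Fin.last m then (a : ℂ)
       else (starRingEnd ℂ) (av (j.castPred hj)))
    else
      (if j = Fin.last m then av (i.castPred hi)
       else if i = j then (d (i.castPred hi) : ℂ) else 0)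

namespace IsArrowhead

variable {m : ℕ} {A : Matrix (Fin (m + 1)) (Fin (m + 1)) ℂ} {d : Fin m → ℝ} {a : ℝ}
  {av : Fin m → ℂ}

theorem apply_castSucc_castSucc (hA : IsArrowhead A d a av) (α β : Fin m) :
    A α.castSucc β.castSucc = if α = β then (d α : ℂ) else 0 := by
  simp [hA α.castSucc, (Fin.castSucc_lt_last _).ne]

theorem apply_castSucc_last (hA : IsArrowhead A d a av) (α : Fin m) :
    A α.castSucc (Fin.last m) = av α := by
  simp [hA α.castSucc, (Fin.castSucc_lt_last _).ne]

theorem apply_last_castSucc (hA : IsArrowhead A d a av) (β : Fin m) :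
    A (Fin.last m) β.castSucc = starRingEnd ℂ (av β) := by
  simp [hA (Fin.last m), (Fin.castSucc_lt_last _).ne]

theorem apply_last_last (hA : IsArrowhead A d a av) : A (Fin.last m) (Fin.last m) = a := by
  simp [hA (Fin.last m)]

theorem mulVec_castSucc (hA : IsArrowhead A d a av) (x : Fin (m + 1) → ℂ) (α : Fin m) :
    (A *ᵥ x) α.castSucc = d α * x α.castSucc + av α * x (Fin.last m) := by
  simp [mulVec, dotProduct, Fin.sum_univ_castSucc, hA.apply_castSucc_castSucc,
    hA.apply_castSucc_last]

theorem mulVec_last (hA : IsArrowhead A d a av) (x : Fin (m + 1) → ℂ) :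
    (A *ᵥ x) (Fin.last m) = ∑ α, starRingEnd ℂ (av α) * x α.castSucc + a * x (Fin.last m) := by
  simp [mulVec, dotProduct, Fin.sum_univ_castSucc, hA.apply_last_castSucc, hA.apply_last_last]

theorem trace_eq (hA : IsArrowhead A d a av) : A.trace = ∑ α, (d α : ℂ) + a := by
  simp [trace, Fin.sum_univ_castSucc, hA.apply_castSucc_castSucc, hA.apply_last_last]

theorem re_inner_toEuclideanLin (hA : IsArrowhead A d a av) {x : EuclideanSpace ℂ (Fin (m + 1))}
    (hx : x (Fin.last m) = 0) :
    RCLike.re (inner ℂ x (toEuclideanLin A x)) = ∑ α, d α * ‖x α.castSucc‖ ^ 2 := by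
  simp only [EuclideanSpace.inner_eq_star_dotProduct, toLpLin_apply, dotProduct,
    Fin.sum_univ_castSucc, hA.mulVec_castSucc, Pi.star_apply, hx, star_zero, mul_zero, add_zero]
  simp [Complex.sq_norm, Complex.normSq_apply, mul_assoc]

theorem sub_eq_sum_of_mulVec_eq (hA : IsArrowhead A d a av) {μ : ℝ} {w : Fin (m + 1) → ℂ}
    (hw : A *ᵥ w = μ • w) (hw0 : w ≠ 0) (hμ : ∀ α, μ ≠ d α) :
    μ - a = ∑ α, ‖av α‖ ^ 2 / (μ - d α) := by
  have hμ' : ∀ α, (μ : ℂ) - d α ≠ 0 := fun α => by exact_mod_cast sub_ne_zero.mpr (hμ α)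
  have hrow : ∀ α, w α.castSucc = av α * w (Fin.last m) / (μ - d α) := fun α => by
    have := congrFun hw α.castSucc
    rw [hA.mulVec_castSucc, Pi.smul_apply, Complex.real_smul] at this
    rw [eq_div_iff (hμ' α)]
    linear_combination this.symm
  have ht : w (Fin.last m) ≠ 0 := fun ht => hw0 <| funext fun i => by
    induction i using Fin.lastCases with
    | last => exact ht
    | cast α => simp [hrow, ht]
  have hlast := congrFun hw (Fin.last m)
  rw [hA.mulVec_last, Pi.smul_apply, Complex.real_smul] at hlast
  simp_rw [hrow, mul_div_assoc', ← mul_assoc, Complex.conj_mul'] at hlast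
  apply Complex.ofReal_injective
  apply mul_right_cancel₀ ht
  push_cast
  simp_rw [sum_mul, div_mul_eq_mul_div]
  linear_combination -hlast

theorem lt_add_of_mulVec_eq (hA : IsArrowhead A d a av) {ε D : ℝ} (hε : 0 < ε)
    (hd : ∀ α, d α ≤ D) (hS : ∑ α, ‖av α‖ ^ 2 ≤ ε * (a - D)) {μ : ℝ} {w : Fin (m + 1) → ℂ}
    (hw : A *ᵥ w = μ • w) (hw0 : w ≠ 0) : μ < a + ε := by
  by_contra! hμ
  have hDa : D ≤ a := by nlinarith [sum_nonneg fun α (_ : α ∈ univ) => sq_nonneg ‖av α‖]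
  have hgap : ∀ α, a + ε - D ≤ μ - d α := fun α => by linarith [hd α]
  have hsec := hA.sub_eq_sum_of_mulVec_eq hw hw0 fun α => by linarith [hgap α]
  have hle : μ - a ≤ (∑ α, ‖av α‖ ^ 2) / (a + ε - D) := by
    rw [hsec, sum_div]
    exact sum_le_sum fun α _ => div_le_div_of_nonneg_left (sq_nonneg _) (by linarith) (hgap α)
  rw [le_div_iff₀ (by linarith)] at hle
  nlinarith

theorem eigenvalues_sort_castSucc_le (hA : IsArrowhead A d a av) (hHerm : A.IsHermitian)
    (k : Fin m) :
    hHerm.eigenvalues (Tuple.sort hHerm.eigenvalues k.castSucc) ≤ d (Tuple.sort d k) := by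
  set ρ := Tuple.sort d
  set T := (Iic k).image (Fin.castSucc ∘ ρ)
  set e := EuclideanSpace.basisFun (Fin (m + 1)) ℂ
  apply hHerm.eigenvalues_sort_le k.castSucc (span ℂ (e '' T))
  · rw [e.finrank_span_image, card_image_of_injective _
      ((Fin.castSucc_injective m).comp ρ.injective), Fin.card_Iic, Fin.val_castSucc]
  · intro x hx
    have hzero : ∀ i ∉ T, x i = 0 := fun i hi => by
      simpa [e, EuclideanSpace.inner_single_left] using e.inner_eq_zero_of_mem_span_image hx hi
    have hlast : x (Fin.last m) = 0 := hzero _ (by simp [T, (Fin.castSucc_lt_last _).ne])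
    rw [hA.re_inner_toEuclideanLin hlast, EuclideanSpace.norm_sq_eq, Fin.sum_univ_castSucc, hlast,
      norm_zero, zero_pow two_ne_zero, add_zero, mul_sum]
    refine sum_le_sum fun α _ => ?_
    by_cases hα : α.castSucc ∈ T
    · obtain ⟨l, hl, hlα⟩ := mem_image.mp hα
      rw [Function.comp_apply, Fin.castSucc_inj] at hlα
      gcongr
      exact hlα ▸ Tuple.monotone_sort d (mem_Iic.mp hl)
    · simp [hzero _ hα]

theorem sum_sub_eigenvalues_sort (hA : IsArrowhead A d a av) (hHerm : A.IsHermitian) :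
    ∑ k, (d (Tuple.sort d k) - hHerm.eigenvalues (Tuple.sort hHerm.eigenvalues k.castSucc))
      = hHerm.eigenvalues (Tuple.sort hHerm.eigenvalues (Fin.last m)) - a := by
  have htrace : ∑ j, hHerm.eigenvalues j = ∑ α, d α + a := by
    have := hHerm.trace_eq_sum_eigenvalues
    rw [hA.trace_eq] at this
    simpa using congrArg Complex.re this.symm
  have hd := Equiv.sum_comp (Tuple.sort d) d
  have hev := Equiv.sum_comp (Tuple.sort hHerm.eigenvalues) hHerm.eigenvalues
  rw [Fin.sum_univ_castSucc] at hev
  rw [sum_sub_distrib]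
  linarith

end IsArrowhead

theorem Fin.exists_perm_apply_castSucc {m : ℕ} (τ : Equiv.Perm (Fin (m + 1)))
    (ρ : Equiv.Perm (Fin m)) :
    ∃ σ : Equiv.Perm (Fin (m + 1)),
      (∀ k, σ k.castSucc = τ (ρ k).castSucc) ∧ σ (Fin.last m) = τ (Fin.last m) :=
  ⟨(finSuccEquivLast.symm.permCongr (Equiv.optionCongr ρ)).trans τ, fun k => by
    simp [Equiv.permCongr_apply, finSuccEquivLast_castSucc, finSuccEquivLast_symm_some], by
    simp [Equiv.permCongr_apply, finSuccEquivLast_last]⟩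

theorem le_mul_sub_of_growth_bound {m : ℕ} (hm : 1 ≤ m) {ε S D a : ℝ} (hε : 0 < ε) (hS : 0 ≤ S)
    (hD : 0 ≤ D) (h : (2 * m - 1) / ε * S + m * D + (m - 1) * ε / (2 * m - 1) ≤ a) :
    S ≤ ε * (a - D) := by
  have hm' : (1 : ℝ) ≤ m := by exact_mod_cast hm
  have hS' : S / ε ≤ (2 * m - 1) / ε * S := by
    rw [div_mul_eq_mul_div]
    gcongr
    nlinarith
  have hε' : 0 ≤ (m - 1) * ε / (2 * m - 1) := by
    apply div_nonneg <;> nlinarith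
  have : S / ε ≤ a - D := by nlinarith
  rwa [div_le_iff₀ hε, mul_comm] at this

/-- Quantitative lemma (Lemma A.1): with the stronger quadratic growth condition
on a, the suitably ordered eigenvalues satisfy d_α − ε < λ_α < d_α + ε for
α < n and a ≤ λₙ < a + (n−1)ε, where n = m+1 ≥ 2. -/
theorem stmt17 (m : ℕ) (hm : 1 ≤ m) (d : Fin m → ℝ) (a : ℝ) (av : Fin m → ℂ)
    (ε : ℝ) (hε : 0 < ε)
    (A : Matrix (Fin (m + 1)) (Fin (m + 1)) ℂ)
    (hA : ∀ i j, A i j =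
      if hi : i = Fin.last m then
        (if hj : j = Fin.last m then (a : ℂ)
         else (starRingEnd ℂ) (av (j.castPred hj)))
      else
        (if hj : j = Fin.last m then av (i.castPred hi)
         else if i = j then (d (i.castPred hi) : ℂ) else 0))
    (hHerm : A.IsHermitian)
    (ha : ((2 * (m : ℝ) - 1) / ε) * ∑ i : Fin m, ‖av i‖ ^ 2
            + (m : ℝ) * ∑ i : Fin m, |d i|
            + ((m : ℝ) - 1) * ε / (2 * (m : ℝ) - 1) ≤ a) :
    ∃ μ : Fin (m + 1) → ℝ,
      (∃ σ : Equiv.Perm (Fin (m + 1)), ∀ i, μ i = hHerm.eigenvalues (σ i)) ∧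
      (∀ α : Fin m, d α - ε < μ α.castSucc ∧ μ α.castSucc < d α + ε) ∧
      a ≤ μ (Fin.last m) ∧ μ (Fin.last m) < a + (m : ℝ) * ε := by
  have hA' : IsArrowhead A d a av := hA
  set ev := hHerm.eigenvalues
  set τ := Tuple.sort ev
  set ρ := Tuple.sort d
  have hd : ∀ α, d α ≤ ∑ i, |d i| := fun α =>
    (le_abs_self _).trans (single_le_sum (fun i _ => abs_nonneg (d i)) (mem_univ α))
  have hS : ∑ i, ‖av i‖ ^ 2 ≤ ε * (a - ∑ i, |d i|) :=
    le_mul_sub_of_growth_bound hm hε (by positivity) (by positivity) ha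
  have hmax : ∀ j, ev j ≤ ev (τ (Fin.last m)) := fun j => by
    have h : ev (τ (τ.symm j)) ≤ ev (τ (Fin.last m)) := Tuple.monotone_sort ev (Fin.le_last _)
    rwa [Equiv.apply_symm_apply] at h
  have hbot : a ≤ ev (τ (Fin.last m)) := by
    simpa [hA'.apply_last_last] using hHerm.re_diag_le hmax (Fin.last m)
  have htop : ev (τ (Fin.last m)) < a + ε :=
    hA'.lt_add_of_mulVec_eq hε hd hS (hHerm.mulVec_eigenvectorBasis _)
      (by simpa using hHerm.eigenvectorBasis.orthonormal.ne_zero _)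
  have hle := hA'.eigenvalues_sort_castSucc_le hHerm
  have hgap : ∀ k, d (ρ k) - ev (τ k.castSucc) < ε := fun k => by
    have := single_le_sum (fun l _ => sub_nonneg.mpr (hle l)) (mem_univ k)
    rw [hA'.sum_sub_eigenvalues_sort hHerm] at this
    linarith
  obtain ⟨σ, hσ, hσlast⟩ := Fin.exists_perm_apply_castSucc τ ρ.symm
  refine ⟨ev ∘ σ, ⟨σ, fun _ => rfl⟩, fun α => ?_, by simpa [hσlast], ?_⟩
  · have hk := ρ.apply_symm_apply α
    simp only [Function.comp_apply, hσ]
    constructor <;> linarith [hk ▸ hle (ρ.symm α), hk ▸ hgap (ρ.symm α)]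
  · have : ε ≤ m * ε := le_mul_of_one_le_left hε.le (by exact_mod_cast hm)
    simp only [Function.comp_apply, hσlast]
    linarith
end
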